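/- Let X be a separable real Banach space for which there exists a bounded linear map P : X** → X of operator norm 1 with P(ι(f)) = f for all f ∈ X, where ι : X → X** is the canonical embedding into the bidual. Then for every n ≥ 1, γ ≥ 1, and every compact set K ⊂ X, the infimum defining δ*_{n,γ}(K)_X is attained: there exist a norm ‖·‖_Y on ℝⁿ and maps ã : K → ℝⁿ with ‖ã(f)−ã(g)‖_Y ≤ γ‖f−g‖_X for all f,g ∈ K, and M̃ : ℝⁿ → X with ‖M̃(x)−M̃(y)‖_X ≤ γ‖x−y‖_Y for all x,y ∈ ℝⁿ, such that sup_{f∈K} ‖f − M̃(ã(f))‖_X = δ*_{n,γ}(K)_X. The analogous attainment holds for δ̄_{n,γ}(K)_X, with ã : X → ℝⁿ γ-Lipschitz on all of X. -/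

import Mathlib

open Metric

def IsNorm {n : ℕ} (nrm : (Fin n → ℝ) → ℝ) : Prop :=
  (∀ x, 0 ≤ nrm x) ∧
  (∀ x, nrm x = 0 → x = 0) ∧
  (∀ (c : ℝ) (x), nrm (c • x) = |c| * nrm x) ∧
  (∀ x y, nrm (x + y) ≤ nrm x + nrm y)

noncomputable def stableWidth (X : Type*) [NormedAddCommGroup X]
    (K : Set X) (n : ℕ) (γ : ℝ) : ℝ :=
  sInf { d | ∃ (nrm : (Fin n → ℝ) → ℝ) (a : X → Fin n → ℝ) (M : (Fin n → ℝ) → X),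
    IsNorm nrm ∧
    (∀ f ∈ K, ∀ g ∈ K, nrm (a f - a g) ≤ γ * ‖f - g‖) ∧
    (∀ x y, ‖M x - M y‖ ≤ γ * nrm (x - y)) ∧
    d = ⨆ f : K, ‖(f : X) - M (a (f : X))‖ }

noncomputable def modStableWidth (X : Type*) [NormedAddCommGroup X]
    (K : Set X) (n : ℕ) (γ : ℝ) : ℝ :=
  sInf { d | ∃ (nrm : (Fin n → ℝ) → ℝ) (a : X → Fin n → ℝ) (M : (Fin n → ℝ) → X),
    IsNorm nrm ∧
    (∀ f g : X, nrm (a f - a g) ≤ γ * ‖f - g‖) ∧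
    (∀ x y, ‖M x - M y‖ ≤ γ * nrm (x - y)) ∧
    d = ⨆ f : K, ‖(f : X) - M (a (f : X))‖ }

noncomputable def entropyNumber (X : Type*) [NormedAddCommGroup X] (K : Set X) (n : ℕ) : ℝ :=
  sInf { ε : ℝ | 0 < ε ∧ ∃ T : Finset X, T.card ≤ 2 ^ n ∧ K ⊆ ⋃ c ∈ T, closedBall c ε }

/-!
Take a minimising sequence of admissible triples `(‖·‖_Y, a, M)`. Auerbach's lemma (rows of unit
vectors maximising the determinant) gives a linear change of coordinates after which every norm lies
between the sup norm and `n` times it; translating the encoder makes it vanish at a fixed `f₀ ∈ K`.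
Along an ultrafilter refining `atTop` the norms and the encoders then converge pointwise by
compactness in `ℝⁿ`, and the decoders converge pointwise weak-* in `X**` by Banach–Alaoglu. All
Lipschitz and error bounds pass to these limits, and the norm-one projection `P` brings the limit
decoder back to `X` without increasing them.
-/

open Filter Topology NormedSpace Matrix

theorem IsCompact.tendsto_limUnder {α ι : Type*} [TopologicalSpace α] [Nonempty α] {s : Set α}
    (hs : IsCompact s) (U : Ultrafilter ι) {u : ι → α} (hu : ∀ᶠ k in (U : Filter ι), u k ∈ s) :
    Tendsto u U (𝓝 (limUnder U u)) := by
  obtain ⟨x, -, hx⟩ := hs.ultrafilter_le_nhds' (U.map u) hu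
  exact tendsto_nhds_limUnder ⟨x, hx⟩

namespace IsNorm

variable {n : ℕ} {nrm : (Fin n → ℝ) → ℝ}

theorem map_zero (h : IsNorm nrm) : nrm 0 = 0 := by
  simpa using h.2.2.1 0 0

theorem map_neg (h : IsNorm nrm) (x : Fin n → ℝ) : nrm (-x) = nrm x := by
  simpa using h.2.2.1 (-1) x

theorem pos (h : IsNorm nrm) {x : Fin n → ℝ} (hx : x ≠ 0) : 0 < nrm x :=
  (h.1 x).lt_of_ne fun e => hx (h.2.1 x e.symm)

theorem abs_sub_le (h : IsNorm nrm) (x y : Fin n → ℝ) : |nrm x - nrm y| ≤ nrm (x - y) := by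
  have hx := h.2.2.2 (x - y) y
  have hy := h.2.2.2 (y - x) x
  rw [sub_add_cancel] at hx hy
  rw [← neg_sub, h.map_neg] at hy
  exact abs_sub_le_iff.2 ⟨by linarith, by linarith⟩

theorem le_mul_norm (h : IsNorm nrm) (x : Fin n → ℝ) :
    nrm x ≤ (∑ i, nrm (Pi.single i 1)) * ‖x‖ := by
  calc nrm x = nrm (∑ i, x i • Pi.single i (1 : ℝ)) := by
        simp_rw [← Pi.single_smul', smul_eq_mul, mul_one, Finset.univ_sum_single]
    _ ≤ ∑ i, nrm (x i • Pi.single i (1 : ℝ)) :=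
        Finset.le_sum_of_subadditive nrm h.map_zero.le h.2.2.2 _ _
    _ = ∑ i, |x i| * nrm (Pi.single i 1) := by simp only [h.2.2.1]
    _ ≤ ∑ i, ‖x‖ * nrm (Pi.single i 1) := by
        gcongr with i
        · exact h.1 _
        · exact norm_le_pi_norm x i
    _ = (∑ i, nrm (Pi.single i 1)) * ‖x‖ := by rw [← Finset.mul_sum, mul_comm]

theorem continuous (h : IsNorm nrm) : Continuous nrm :=
  (LipschitzWith.of_dist_le' fun x y => by
    rw [Real.dist_eq, dist_eq_norm]
    exact (h.abs_sub_le x y).trans (h.le_mul_norm _)).continuous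

theorem exists_pos_mul_norm_le (h : IsNorm nrm) : ∃ c > 0, ∀ x, c * ‖x‖ ≤ nrm x := by
  obtain ⟨c, hc, hcle⟩ := (isCompact_sphere (0 : Fin n → ℝ) 1).exists_forall_le'
    h.continuous.continuousOn fun x hx => h.pos (ne_zero_of_mem_unit_sphere ⟨x, hx⟩)
  refine ⟨c, hc, fun x => ?_⟩
  rcases eq_or_ne x 0 with rfl | hx
  · simp [h.map_zero]
  · have hxpos : 0 < ‖x‖ := norm_pos_iff.2 hx
    have := hcle (‖x‖⁻¹ • x) (by simp [norm_smul, hxpos.ne'])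
    rw [h.2.2.1, abs_of_pos (inv_pos.2 hxpos), le_inv_mul_iff₀ hxpos] at this
    linarith

theorem isCompact_preimage_one (h : IsNorm nrm) : IsCompact (nrm ⁻¹' {1}) := by
  obtain ⟨c, hc, hcle⟩ := h.exists_pos_mul_norm_le
  refine Metric.isCompact_of_isClosed_isBounded (isClosed_singleton.preimage h.continuous)
    ((Metric.isBounded_closedBall (x := 0) (r := c⁻¹)).subset fun x hx => ?_)
  rw [mem_closedBall_zero_iff, ← one_div, le_div_iff₀' hc]
  exact (hcle x).trans_eq hx

theorem comp_linearEquiv (h : IsNorm nrm) (e : (Fin n → ℝ) ≃ₗ[ℝ] (Fin n → ℝ)) :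
    IsNorm (fun x => nrm (e x)) :=
  ⟨fun x => h.1 _, fun x hx => e.map_eq_zero_iff.1 (h.2.1 _ hx),
    fun c x => by simp only [map_smul, h.2.2.1], fun x y => by simp only [map_add, h.2.2.2]⟩

theorem exists_abs_det_updateRow_le (h : IsNorm nrm) :
    ∃ B : Matrix (Fin n) (Fin n) ℝ, (∀ j, nrm (B j) = 1) ∧ B.det ≠ 0 ∧
      ∀ j y, |(B.updateRow j y).det| ≤ nrm y * |B.det| := by
  set S : Set (Matrix (Fin n) (Fin n) ℝ) := Set.univ.pi fun _ => nrm ⁻¹' {1}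
  have hS : IsCompact S := isCompact_univ_pi fun _ => h.isCompact_preimage_one
  set E : Matrix (Fin n) (Fin n) ℝ := diagonal fun j => (nrm (Pi.single j 1))⁻¹
  have hsingle : ∀ j : Fin n, 0 < nrm (Pi.single j 1) := fun j => h.pos (by simp)
  have hE : E ∈ S := fun j _ => by
    have hEj : E j = (nrm (Pi.single j 1))⁻¹ • Pi.single j 1 := by
      ext k
      simp [E, diagonal_apply, Pi.single_apply, eq_comm]
    rw [Set.mem_preimage, Set.mem_singleton_iff, hEj, h.2.2.1, abs_of_pos (inv_pos.2 (hsingle j)),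
      inv_mul_cancel₀ (hsingle j).ne']
  obtain ⟨B, hBS, hBmax⟩ := hS.exists_isMaxOn (f := fun A => |A.det|) ⟨E, hE⟩
    continuous_id.matrix_det.abs.continuousOn
  have hunit : ∀ j, nrm (B j) = 1 := fun j => hBS j trivial
  have hdet : B.det ≠ 0 := by
    have hE0 : 0 < |E.det| := by
      simp [E, det_diagonal, Finset.prod_ne_zero_iff, (hsingle _).ne']
    have : |E.det| ≤ |B.det| := isMaxOn_iff.1 hBmax E hE
    exact abs_pos.1 (hE0.trans_le this)
  refine ⟨B, hunit, hdet, fun j y => ?_⟩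
  rcases eq_or_ne y 0 with rfl | hy
  · simp [h.map_zero, det_eq_zero_of_row_eq_zero j]
  have hy' := h.pos hy
  have hmem : B.updateRow j ((nrm y)⁻¹ • y) ∈ S := fun i _ => by
    rcases eq_or_ne i j with rfl | hij
    · simp [updateRow_self, h.2.2.1, hy'.ne', abs_of_pos hy']
    · simp [updateRow_ne hij, hunit i]
  have := isMaxOn_iff.1 hBmax _ hmem
  rwa [det_updateRow_smul, abs_mul, abs_inv, abs_of_pos hy', inv_mul_le_iff₀ hy'] at this

-- Auerbach's lemma; the lower bound is Cramer's rule combined with the maximality of `|det B|`.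
theorem exists_linearEquiv_norm_le (h : IsNorm nrm) :
    ∃ e : (Fin n → ℝ) ≃ₗ[ℝ] (Fin n → ℝ), ∀ x, ‖x‖ ≤ nrm (e x) ∧ nrm (e x) ≤ n * ‖x‖ := by
  obtain ⟨B, hunit, hdet, hmax⟩ := h.exists_abs_det_updateRow_le
  have hlow : ∀ x, ‖x‖ ≤ nrm (Bᵀ *ᵥ x) := fun x => by
    refine (pi_norm_le_iff_of_nonneg (h.1 _)).2 fun j => ?_
    have hcramer : Bᵀ.cramer (Bᵀ *ᵥ x) = B.det • x := by
      rw [cramer_eq_adjugate_mulVec, mulVec_mulVec, adjugate_mul,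
        smul_mulVec, one_mulVec, det_transpose]
    have := hmax j (Bᵀ *ᵥ x)
    rwa [← cramer_transpose_apply, hcramer, Pi.smul_apply, smul_eq_mul, abs_mul, mul_comm,
      mul_le_mul_iff_left₀ (abs_pos.2 hdet), ← Real.norm_eq_abs] at this
  have hup : ∀ x, nrm (Bᵀ *ᵥ x) ≤ n * ‖x‖ := fun x => by
    calc nrm (Bᵀ *ᵥ x) = nrm (∑ j, x j • B j) := by
          simp [mulVec_eq_sum]
      _ ≤ ∑ j, nrm (x j • B j) := Finset.le_sum_of_subadditive nrm h.map_zero.le h.2.2.2 _ _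
      _ = ∑ j, ‖x j‖ := by simp only [h.2.2.1, hunit, mul_one, Real.norm_eq_abs]
      _ ≤ ∑ _j : Fin n, ‖x‖ := Finset.sum_le_sum fun j _ => norm_le_pi_norm x j
      _ = n * ‖x‖ := by simp
  have hinj : Function.Injective (mulVecLin Bᵀ) :=
    (injective_iff_map_eq_zero _).2 fun x hx =>
      norm_le_zero_iff.1 ((hlow x).trans_eq (by rw [← mulVecLin_apply, hx, h.map_zero]))
  exact ⟨LinearEquiv.ofInjectiveEndo _ hinj, fun x => ⟨hlow x, hup x⟩⟩

theorem of_tendsto {ι : Type*} {l : Filter ι} [l.NeBot]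
    {N : ι → (Fin n → ℝ) → ℝ} {Nl : (Fin n → ℝ) → ℝ} (hN : ∀ k, IsNorm (N k))
    (hlow : ∀ k x, ‖x‖ ≤ N k x) (hlim : ∀ x, Tendsto (fun k => N k x) l (𝓝 (Nl x))) :
    IsNorm Nl := by
  refine ⟨fun x => ge_of_tendsto' (hlim x) fun k => (hN k).1 x, fun x hx => ?_,
    fun c x => tendsto_nhds_unique (hlim (c • x)) ?_,
    fun x y => le_of_tendsto_of_tendsto' (hlim (x + y)) ((hlim x).add (hlim y))
      fun k => (hN k).2.2.2 x y⟩
  · exact norm_le_zero_iff.1 (hx ▸ ge_of_tendsto' (hlim x) fun k => hlow k x)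
  · simpa only [(hN _).2.2.1] using (hlim x).const_mul |c|

theorem tendsto_apply_of_tendsto {ι : Type*} {l : Filter ι}
    {N : ι → (Fin n → ℝ) → ℝ} {Nl : (Fin n → ℝ) → ℝ} {C : ℝ} (hN : ∀ k, IsNorm (N k))
    (hup : ∀ k x, N k x ≤ C * ‖x‖) {v : ι → Fin n → ℝ} {w : Fin n → ℝ}
    (hlim : Tendsto (fun k => N k w) l (𝓝 (Nl w))) (hv : Tendsto v l (𝓝 w)) :
    Tendsto (fun k => N k (v k)) l (𝓝 (Nl w)) := by
  have hdiff : Tendsto (fun k => N k (v k) - N k w) l (𝓝 0) := by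
    refine squeeze_zero_norm (fun k => ((hN k).abs_sub_le _ _).trans (hup k _)) ?_
    simpa using (tendsto_iff_norm_sub_tendsto_zero.1 hv).const_mul C
  simpa using hdiff.add hlim

theorem exists_ultrafilter_limit {ι : Type*} (U : Ultrafilter ι) {N : ι → (Fin n → ℝ) → ℝ}
    {C : ℝ} (hN : ∀ k, IsNorm (N k)) (hlow : ∀ k x, ‖x‖ ≤ N k x) (hup : ∀ k x, N k x ≤ C * ‖x‖) :
    ∃ Nl, IsNorm Nl ∧ ∀ {v : ι → Fin n → ℝ} {w}, Tendsto v U (𝓝 w) →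
      Tendsto (fun k => N k (v k)) U (𝓝 (Nl w)) := by
  have hlim : ∀ x, Tendsto (fun k => N k x) U (𝓝 (limUnder U fun k => N k x)) := fun x =>
    isCompact_Icc.tendsto_limUnder U (.of_forall fun k => ⟨(hN k).1 x, hup k x⟩)
  exact ⟨_, of_tendsto hN hlow hlim,
    fun hv => tendsto_apply_of_tendsto (Nl := fun x => limUnder U fun k => N k x) hN hup
      (hlim _) hv⟩

end IsNorm

theorem isNorm_norm {n : ℕ} : IsNorm (fun x : Fin n → ℝ => ‖x‖) :=
  ⟨norm_nonneg, fun _ => norm_eq_zero.1, fun c x => by simp only [norm_smul, Real.norm_eq_abs],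
    norm_add_le⟩

section Bidual

variable {X : Type*} [NormedAddCommGroup X] [NormedSpace ℝ X] {ι : Type*}

theorem exists_forall_tendsto_apply_of_eventually_norm_le (U : Ultrafilter ι) {v : ι → X}
    {R : ℝ} (hv : ∀ᶠ k in (U : Filter ι), ‖v k‖ ≤ R) :
    ∃ m : StrongDual ℝ (StrongDual ℝ X), ∀ φ : StrongDual ℝ X,
      Tendsto (fun k => φ (v k)) U (𝓝 (m φ)) := by
  have hball := (WeakDual.isCompact_closedBall (𝕜 := ℝ) (0 : StrongDual ℝ (StrongDual ℝ X)) R)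
  have hlim := hball.tendsto_limUnder U (u := fun k => StrongDual.toWeakDual
    (inclusionInDoubleDual ℝ X (v k))) (hv.mono fun k hk => by
      simpa using (double_dual_bound ℝ X (v k)).trans hk)
  exact ⟨_, fun φ => ((WeakDual.eval_continuous φ).tendsto _).comp hlim⟩

theorem norm_le_of_tendsto_apply {l : Filter ι} [l.NeBot] {v : ι → X}
    {m : StrongDual ℝ (StrongDual ℝ X)} (hv : ∀ φ, Tendsto (fun k => φ (v k)) l (𝓝 (m φ)))
    {c : ι → ℝ} {c₀ : ℝ} (hc : Tendsto c l (𝓝 c₀)) (hvc : ∀ k, ‖v k‖ ≤ c k) : ‖m‖ ≤ c₀ := by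
  have hc₀ : 0 ≤ c₀ := ge_of_tendsto' hc fun k => (norm_nonneg _).trans (hvc k)
  refine ContinuousLinearMap.opNorm_le_bound _ hc₀ fun φ =>
    le_of_tendsto_of_tendsto' (hv φ).norm (hc.mul_const ‖φ‖) fun k => ?_
  rw [mul_comm]
  exact (φ.le_opNorm _).trans (by gcongr; exact hvc k)

end Bidual

/-- An admissible triple `(‖·‖_Y, a, M)` in the definition of the stable manifold width, with the
encoder `a` required to be Lipschitz on `s` (`s = K` for `δ*`, `s = univ` for `δ̄`). -/
structure StableManifoldApprox (X : Type*) [NormedAddCommGroup X] (s : Set X) (n : ℕ) (γ : ℝ) where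
  nrm : (Fin n → ℝ) → ℝ
  a : X → Fin n → ℝ
  M : (Fin n → ℝ) → X
  isNorm : IsNorm nrm
  lipschitz_a : ∀ f ∈ s, ∀ g ∈ s, nrm (a f - a g) ≤ γ * ‖f - g‖
  lipschitz_M : ∀ x y, ‖M x - M y‖ ≤ γ * nrm (x - y)

namespace StableManifoldApprox

variable {X : Type*} [NormedAddCommGroup X] {s K : Set X} {n : ℕ} {γ : ℝ}

noncomputable def error (A : StableManifoldApprox X s n γ) (K : Set X) : ℝ :=
  ⨆ f : K, ‖(f : X) - A.M (A.a f)‖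

def zero (hγ : 0 ≤ γ) : StableManifoldApprox X s n γ where
  nrm x := ‖x‖
  a _ := 0
  M _ := 0
  isNorm := isNorm_norm
  lipschitz_a f _ g _ := by simpa using mul_nonneg hγ (norm_nonneg (f - g))
  lipschitz_M x y := by simpa using mul_nonneg hγ (norm_nonneg (x - y))

theorem error_nonneg (A : StableManifoldApprox X s n γ) (K : Set X) : 0 ≤ A.error K :=
  Real.iSup_nonneg fun _ => norm_nonneg _

theorem error_empty (A : StableManifoldApprox X s n γ) : A.error ∅ = 0 :=
  Real.iSup_of_isEmpty _

theorem norm_sub_le_error (A : StableManifoldApprox X s n γ) (hγ : 0 ≤ γ) (hK : IsCompact K)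
    (hKs : K ⊆ s) {f : X} (hf : f ∈ K) : ‖f - A.M (A.a f)‖ ≤ A.error K := by
  have hMa : LipschitzOnWith (γ * γ).toNNReal (fun f => A.M (A.a f)) K :=
    LipschitzOnWith.of_dist_le' fun f hf g hg => by
      rw [dist_eq_norm, dist_eq_norm, mul_assoc]
      exact (A.lipschitz_M _ _).trans
        (mul_le_mul_of_nonneg_left (A.lipschitz_a f (hKs hf) g (hKs hg)) hγ)
  have hbdd := hK.bddAbove_image (continuousOn_id.sub hMa.continuousOn).norm
  rw [Set.image_eq_range] at hbdd
  exact le_ciSup hbdd ⟨f, hf⟩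

theorem norm_M_le (A : StableManifoldApprox X s n γ) (hγ : 0 ≤ γ) (hK : IsCompact K)
    (hKs : K ⊆ s) {f₀ : X} (hf₀ : f₀ ∈ K) (x : Fin n → ℝ) :
    ‖A.M x‖ ≤ γ * A.nrm (x - A.a f₀) + A.error K + ‖f₀‖ := by
  calc ‖A.M x‖ = ‖(A.M x - A.M (A.a f₀)) - (f₀ - A.M (A.a f₀)) + f₀‖ := by abel_nf
    _ ≤ ‖A.M x - A.M (A.a f₀)‖ + ‖f₀ - A.M (A.a f₀)‖ + ‖f₀‖ :=
        (norm_add_le _ _).trans (add_le_add_left (norm_sub_le _ _) _)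
    _ ≤ γ * A.nrm (x - A.a f₀) + A.error K + ‖f₀‖ := by
        gcongr
        · exact A.lipschitz_M _ _
        · exact A.norm_sub_le_error hγ hK hKs hf₀

theorem exists_normalized (A : StableManifoldApprox X s n γ) (f₀ : X) :
    ∃ B : StableManifoldApprox X s n γ, (∀ f, B.M (B.a f) = A.M (A.a f)) ∧ B.a f₀ = 0 ∧
      ∀ x, ‖x‖ ≤ B.nrm x ∧ B.nrm x ≤ n * ‖x‖ := by
  obtain ⟨e, he⟩ := A.isNorm.exists_linearEquiv_norm_le
  refine ⟨{ nrm := fun x => A.nrm (e x)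
            a := fun f => e.symm (A.a f - A.a f₀)
            M := fun x => A.M (e x + A.a f₀)
            isNorm := A.isNorm.comp_linearEquiv e
            lipschitz_a := fun f hf g hg => ?_
            lipschitz_M := fun x y => ?_ }, fun f => ?_, by simp, he⟩
  · simpa only [← map_sub, e.apply_symm_apply, sub_sub_sub_cancel_right] using
      A.lipschitz_a f hf g hg
  · simpa only [add_sub_add_right_eq_sub, map_sub] using A.lipschitz_M (e x + A.a f₀) (e y + A.a f₀)
  · simp

theorem error_eq_of_comp_eq {A B : StableManifoldApprox X s n γ}
    (h : ∀ f, B.M (B.a f) = A.M (A.a f)) (K : Set X) : B.error K = A.error K := by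
  simp only [error, h]

variable [NormedSpace ℝ X] {ι : Type*}

theorem exists_error_le_of_tendsto (U : Ultrafilter ι) (A : ι → StableManifoldApprox X s n γ)
    (P : StrongDual ℝ (StrongDual ℝ X) →L[ℝ] X) (hP₁ : ∀ w, ‖P w‖ ≤ ‖w‖)
    (hP : ∀ f : X, P (inclusionInDoubleDual ℝ X f) = f) (hγ : 0 ≤ γ) (hK : IsCompact K)
    (hKs : K ⊆ s) {f₀ : X} (hf₀ : f₀ ∈ K) {C : ℝ} (hlow : ∀ k x, ‖x‖ ≤ (A k).nrm x)
    (hup : ∀ k x, (A k).nrm x ≤ C * ‖x‖) (ha₀ : ∀ k, (A k).a f₀ = 0) {δ : ℝ}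
    (hδ : Tendsto (fun k => (A k).error K) U (𝓝 δ)) :
    ∃ B : StableManifoldApprox X s n γ, B.error K ≤ δ := by
  obtain ⟨N, hN, hNlim⟩ := IsNorm.exists_ultrafilter_limit U (fun k => (A k).isNorm) hlow hup
  set a := fun f => limUnder (U : Filter ι) fun k => (A k).a f
  have ha : ∀ f ∈ s, Tendsto (fun k => (A k).a f) U (𝓝 (a f)) := fun f hf =>
    (isCompact_closedBall (0 : Fin n → ℝ) (γ * ‖f - f₀‖)).tendsto_limUnder U (.of_forall fun k => by
      simpa [ha₀] using (hlow k _).trans ((A k).lipschitz_a f hf f₀ (hKs hf₀)))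
  have hMbdd : ∀ x, ∀ᶠ k in (U : Filter ι), ‖(A k).M x‖ ≤ γ * (C * ‖x‖) + (δ + 1) + ‖f₀‖ :=
    fun x => (hδ.eventually (gt_mem_nhds (lt_add_one δ))).mono fun k hk => by
      refine ((A k).norm_M_le hγ hK hKs hf₀ x).trans ?_
      rw [ha₀, sub_zero]
      gcongr
      exact hup k x
  choose m hm using fun x => exists_forall_tendsto_apply_of_eventually_norm_le U (hMbdd x)
  refine ⟨⟨N, a, fun x => P (m x), hN, fun f hf g hg => ?_, fun x y => ?_⟩, ?_⟩
  · exact le_of_tendsto' (hNlim ((ha f hf).sub (ha g hg))) fun k => (A k).lipschitz_a f hf g hg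
  · rw [← map_sub]
    refine (hP₁ _).trans (norm_le_of_tendsto_apply (v := fun k => (A k).M x - (A k).M y)
      (fun φ => by simpa using (hm x φ).sub (hm y φ)) ((hNlim tendsto_const_nhds).const_mul γ)
      fun k => (A k).lipschitz_M x y)
  · refine Real.iSup_le (fun f => ?_) (ge_of_tendsto' hδ fun k => (A k).error_nonneg K)
    have hfs := hKs f.2
    have hdist : Tendsto (fun k => (A k).error K + γ * (C * ‖(A k).a f - a f‖)) U (𝓝 δ) := by
      simpa using
        hδ.add (((tendsto_iff_norm_sub_tendsto_zero.1 (ha f hfs)).const_mul C).const_mul γ)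
    have hrepr : (f : X) - P (m (a f)) = P (inclusionInDoubleDual ℝ X f - m (a f)) := by
      rw [map_sub P, hP]
    rw [hrepr]
    refine (hP₁ _).trans (norm_le_of_tendsto_apply (v := fun k => (f : X) - (A k).M (a f))
      (fun φ => by simpa using tendsto_const_nhds.sub (hm (a f) φ)) hdist fun k => ?_)
    calc ‖(f : X) - (A k).M (a f)‖
        ≤ ‖(f : X) - (A k).M ((A k).a f)‖ + ‖(A k).M ((A k).a f) - (A k).M (a f)‖ :=
          norm_sub_le_norm_sub_add_norm_sub _ _ _
      _ ≤ (A k).error K + γ * (C * ‖(A k).a f - a f‖) := by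
          gcongr
          · exact (A k).norm_sub_le_error hγ hK hKs f.2
          · exact ((A k).lipschitz_M _ _).trans (by gcongr; exact hup k _)

theorem exists_error_eq_iInf (P : StrongDual ℝ (StrongDual ℝ X) →L[ℝ] X)
    (hP₁ : ∀ w, ‖P w‖ ≤ ‖w‖) (hP : ∀ f : X, P (inclusionInDoubleDual ℝ X f) = f) (hγ : 0 ≤ γ)
    (hK : IsCompact K) (hKs : K ⊆ s) :
    ∃ A : StableManifoldApprox X s n γ,
      A.error K = ⨅ B : StableManifoldApprox X s n γ, B.error K := by
  have : Nonempty (StableManifoldApprox X s n γ) := ⟨zero hγ⟩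
  rcases K.eq_empty_or_nonempty with rfl | ⟨f₀, hf₀⟩
  · exact ⟨zero hγ, by simp only [error_empty, ciInf_const]⟩
  have hbdd : BddBelow (Set.range fun B : StableManifoldApprox X s n γ => B.error K) :=
    ⟨0, Set.forall_mem_range.2 fun B => B.error_nonneg K⟩
  obtain ⟨u, -, hu, hu_mem⟩ := exists_seq_tendsto_sInf (Set.range_nonempty _) hbdd
  choose A hA using hu_mem
  choose B hBA hBa hBnrm using fun k => (A k).exists_normalized f₀
  have hB : Tendsto (fun k => (B k).error K) (Ultrafilter.of (atTop : Filter ℕ))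
      (𝓝 (⨅ B : StableManifoldApprox X s n γ, B.error K)) := by
    simp only [error_eq_of_comp_eq (hBA _), hA]
    exact hu.mono_left (Ultrafilter.of_le _)
  obtain ⟨L, hL⟩ := exists_error_le_of_tendsto _ B P hP₁ hP hγ hK hKs hf₀ (fun k x => (hBnrm k x).1)
    (fun k x => (hBnrm k x).2) hBa hB
  exact ⟨L, hL.antisymm (ciInf_le hbdd L)⟩

end StableManifoldApprox

theorem stableWidth_eq_iInf {X : Type*} [NormedAddCommGroup X] {K : Set X} {n : ℕ} {γ : ℝ} :
    stableWidth X K n γ = ⨅ A : StableManifoldApprox X K n γ, A.error K := by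
  refine congrArg sInf (Set.ext fun d => ⟨?_, ?_⟩)
  · rintro ⟨nrm, a, M, hnrm, ha, hM, rfl⟩
    exact ⟨⟨nrm, a, M, hnrm, ha, hM⟩, rfl⟩
  · rintro ⟨A, rfl⟩
    exact ⟨A.nrm, A.a, A.M, A.isNorm, A.lipschitz_a, A.lipschitz_M, rfl⟩

theorem modStableWidth_eq_iInf {X : Type*} [NormedAddCommGroup X] {K : Set X} {n : ℕ} {γ : ℝ} :
    modStableWidth X K n γ = ⨅ A : StableManifoldApprox X Set.univ n γ, A.error K := by
  refine congrArg sInf (Set.ext fun d => ⟨?_, ?_⟩)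
  · rintro ⟨nrm, a, M, hnrm, ha, hM, rfl⟩
    exact ⟨⟨nrm, a, M, hnrm, fun f _ g _ => ha f g, hM⟩, rfl⟩
  · rintro ⟨A, rfl⟩
    exact ⟨A.nrm, A.a, A.M, A.isNorm, fun f g => A.lipschitz_a f trivial g trivial,
      A.lipschitz_M, rfl⟩

theorem stmt4_general {X : Type*} [NormedAddCommGroup X] [NormedSpace ℝ X]
    (P : StrongDual ℝ (StrongDual ℝ X) →L[ℝ] X)
    (hPnorm : @Norm.norm _ (@ContinuousLinearMap.hasOpNorm ℝ ℝ (StrongDual ℝ (StrongDual ℝ X)) X _ _ _ _ _ _ _) P = 1)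
    (hP : ∀ f : X, P (NormedSpace.inclusionInDoubleDual ℝ X f) = f)
    (n : ℕ) (γ : ℝ) (hγ : 1 ≤ γ) (K : Set X) (hK : IsCompact K) :
    (∃ (nrm : (Fin n → ℝ) → ℝ) (a : X → Fin n → ℝ) (M : (Fin n → ℝ) → X),
      IsNorm nrm ∧
      (∀ f ∈ K, ∀ g ∈ K, nrm (a f - a g) ≤ γ * ‖f - g‖) ∧
      (∀ x y, ‖M x - M y‖ ≤ γ * nrm (x - y)) ∧
      (⨆ f : K, ‖(f : X) - M (a (f : X))‖) = stableWidth X K n γ) ∧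
    (∃ (nrm : (Fin n → ℝ) → ℝ) (a : X → Fin n → ℝ) (M : (Fin n → ℝ) → X),
      IsNorm nrm ∧
      (∀ f g : X, nrm (a f - a g) ≤ γ * ‖f - g‖) ∧
      (∀ x y, ‖M x - M y‖ ≤ γ * nrm (x - y)) ∧
      (⨆ f : K, ‖(f : X) - M (a (f : X))‖) = modStableWidth X K n γ) := by
  have hP₁ : ∀ w, ‖P w‖ ≤ ‖w‖ := fun w => by
    simpa [hPnorm] using ContinuousLinearMap.le_opNorm (𝕜 := ℝ) (𝕜₂ := ℝ) P w
  have hγ₀ : 0 ≤ γ := zero_le_one.trans hγ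
  obtain ⟨A, hA⟩ :=
    StableManifoldApprox.exists_error_eq_iInf (s := K) (n := n) P hP₁ hP hγ₀ hK subset_rfl
  obtain ⟨B, hB⟩ :=
    StableManifoldApprox.exists_error_eq_iInf (n := n) P hP₁ hP hγ₀ hK (Set.subset_univ K)
  exact ⟨⟨A.nrm, A.a, A.M, A.isNorm, A.lipschitz_a, A.lipschitz_M,
      hA.trans stableWidth_eq_iInf.symm⟩,
    ⟨B.nrm, B.a, B.M, B.isNorm, fun f g => B.lipschitz_a f trivial g trivial, B.lipschitz_M,
      hB.trans modStableWidth_eq_iInf.symm⟩⟩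

/-- If a separable Banach space X is complemented in its bidual by a norm-one
linear projection, then the infima defining both δ*_{n,γ}(K)_X and δ̄_{n,γ}(K)_X are attained. -/
theorem stmt4 {X : Type*} [NormedAddCommGroup X] [NormedSpace ℝ X] [CompleteSpace X]
    [TopologicalSpace.SeparableSpace X]
    (P : StrongDual ℝ (StrongDual ℝ X) →L[ℝ] X)
    (hPnorm : @Norm.norm _ (@ContinuousLinearMap.hasOpNorm ℝ ℝ (StrongDual ℝ (StrongDual ℝ X)) X _ _ _ _ _ _ _) P = 1)
    (hP : ∀ f : X, P (NormedSpace.inclusionInDoubleDual ℝ X f) = f)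
    (n : ℕ) (hn : 1 ≤ n) (γ : ℝ) (hγ : 1 ≤ γ) (K : Set X) (hK : IsCompact K) :
    (∃ (nrm : (Fin n → ℝ) → ℝ) (a : X → Fin n → ℝ) (M : (Fin n → ℝ) → X),
      IsNorm nrm ∧
      (∀ f ∈ K, ∀ g ∈ K, nrm (a f - a g) ≤ γ * ‖f - g‖) ∧
      (∀ x y, ‖M x - M y‖ ≤ γ * nrm (x - y)) ∧
      (⨆ f : K, ‖(f : X) - M (a (f : X))‖) = stableWidth X K n γ) ∧
    (∃ (nrm : (Fin n → ℝ) → ℝ) (a : X → Fin n → ℝ) (M : (Fin n → ℝ) → X),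
      IsNorm nrm ∧
      (∀ f g : X, nrm (a f - a g) ≤ γ * ‖f - g‖) ∧
      (∀ x y, ‖M x - M y‖ ≤ γ * nrm (x - y)) ∧
      (⨆ f : K, ‖(f : X) - M (a (f : X))‖) = modStableWidth X K n γ) :=
  stmt4_general P hPnorm hP n γ hγ K hK
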